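/- Let X be a finite nonempty set, f : X → ℝ, λ > 0, γ > 0, π₀ the uniform pmf on X, α(g) = (λ/(λ+γ))^g for real g ≥ 0, and π_g(x) ∝ exp(-(1-α(g))f(x)/γ). Then d/dg E_{π_g}[f] = -α(g)·log((λ+γ)/λ)·(1/γ)·Var_{π_g}(f) ≤ 0, so E_{π_g}[f] is non-increasing in g. -/

import Mathlib

open Real BigOperators Finset Filter

def IsPMF {X : Type*} [Fintype X] (p : X → ℝ) : Prop :=
  (∀ x, 0 ≤ p x) ∧ ∑ x, p x = 1

noncomputable def expVal {X : Type*} [Fintype X] (p f : X → ℝ) : ℝ := ∑ x, p x * f x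

noncomputable def varVal {X : Type*} [Fintype X] (p f : X → ℝ) : ℝ :=
  expVal p (fun x => f x ^ 2) - (expVal p f) ^ 2

noncomputable def covVal {X : Type*} [Fintype X] (p u v : X → ℝ) : ℝ :=
  expVal p (fun x => u x * v x) - expVal p u * expVal p v

noncomputable def klDiv' {X : Type*} [Fintype X] (p q : X → ℝ) : ℝ :=
  ∑ x, p x * Real.log (p x / q x)

noncomputable def entropyF {X : Type*} [Fintype X] (p : X → ℝ) : ℝ :=
  -∑ x, p x * Real.log (p x)

noncomputable def tilt {X : Type*} [Fintype X] (π₀ f : X → ℝ) (g : ℝ) (x : X) : ℝ :=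
  π₀ x * Real.exp (-g * f x) / ∑ y, π₀ y * Real.exp (-g * f y)


noncomputable def pg10 {X : Type*} [Fintype X] (f : X → ℝ) (lam γ s : ℝ) (x : X) : ℝ :=
  Real.exp (-((1 - (lam / (lam + γ)) ^ s) * f x / γ)) /
    ∑ y, Real.exp (-((1 - (lam / (lam + γ)) ^ s) * f y / γ))

/-! The law `pg10 f lam γ g` is the Gibbs tilt of the uniform prior at inverse temperature
`β g = (1 - α g) / γ`. Differentiating a Gibbs mean in the inverse temperature gives minus the
variance, and `β' g = α g · log ((λ + γ) / λ) / γ ≥ 0`, so the chain rule yields the formula; a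
nonpositive derivative everywhere makes the mean antitone. -/

section Tilt

variable {X : Type*} [Fintype X]

theorem IsPMF.varVal_nonneg {p : X → ℝ} (hp : IsPMF p) (f : X → ℝ) : 0 ≤ varVal p f := by
  have hcentered : ∑ x, p x * (f x - expVal p f) ^ 2 =
      ∑ x, p x * f x ^ 2 - 2 * expVal p f * ∑ x, p x * f x + expVal p f ^ 2 * ∑ x, p x := by
    simp only [Finset.mul_sum, ← Finset.sum_sub_distrib, ← Finset.sum_add_distrib]
    exact Finset.sum_congr rfl fun x _ => by ring
  rw [hp.2] at hcentered
  have hvar : varVal p f = ∑ x, p x * (f x - expVal p f) ^ 2 := by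
    rw [hcentered, varVal, expVal, expVal]
    ring
  rw [hvar]
  exact Finset.sum_nonneg fun x _ => mul_nonneg (hp.1 x) (sq_nonneg _)

theorem varVal_eq_covVal (p f : X → ℝ) : varVal p f = covVal p f f := by
  simp only [varVal, covVal, sq]

theorem expVal_tilt (π₀ f u : X → ℝ) (t : ℝ) :
    expVal (tilt π₀ f t) u =
      (∑ x, π₀ x * exp (-t * f x) * u x) / ∑ x, π₀ x * exp (-t * f x) := by
  simp only [expVal, tilt, div_mul_eq_mul_div, Finset.sum_div]

variable [Nonempty X] {π₀ : X → ℝ}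

theorem sum_tilt_weight_pos (hπ₀ : ∀ x, 0 < π₀ x) (f : X → ℝ) (t : ℝ) :
    0 < ∑ x, π₀ x * exp (-t * f x) :=
  Finset.sum_pos (fun x _ => mul_pos (hπ₀ x) (exp_pos _)) Finset.univ_nonempty

theorem isPMF_tilt (hπ₀ : ∀ x, 0 < π₀ x) (f : X → ℝ) (t : ℝ) : IsPMF (tilt π₀ f t) :=
  ⟨fun x => div_nonneg (mul_pos (hπ₀ x) (exp_pos _)).le (sum_tilt_weight_pos hπ₀ f t).le, by
    simp only [tilt, ← Finset.sum_div, div_self (sum_tilt_weight_pos hπ₀ f t).ne']⟩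

theorem hasDerivAt_expVal_tilt (hπ₀ : ∀ x, 0 < π₀ x) (f u : X → ℝ) (t : ℝ) :
    HasDerivAt (fun t => expVal (tilt π₀ f t) u) (-covVal (tilt π₀ f t) f u) t := by
  have hweight (x : X) : HasDerivAt (fun t => π₀ x * exp (-t * f x))
      (π₀ x * exp (-t * f x) * -f x) t := by
    simpa [mul_assoc] using (((hasDerivAt_id t).neg.mul_const (f x)).exp).const_mul (π₀ x)
  have hN := HasDerivAt.fun_sum fun x (_ : x ∈ Finset.univ) => (hweight x).mul_const (u x)
  have hZ := HasDerivAt.fun_sum fun x (_ : x ∈ Finset.univ) => hweight x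
  have hZ₀ := (sum_tilt_weight_pos hπ₀ f t).ne'
  simp only [expVal_tilt]
  refine (hN.div hZ hZ₀).congr_deriv ?_
  simp only [covVal, expVal_tilt]
  field_simp
  simp only [neg_mul, mul_neg, Finset.sum_neg_distrib]
  ring

end Tilt

section Interpolation

variable {X : Type*} [Fintype X]

theorem pg10_eq_tilt (f : X → ℝ) (lam γ s : ℝ) :
    pg10 f lam γ s = tilt 1 f ((1 - (lam / (lam + γ)) ^ s) / γ) := by
  have hexponent (y : X) :
      -((1 - (lam / (lam + γ)) ^ s) * f y / γ) = -((1 - (lam / (lam + γ)) ^ s) / γ) * f y := by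
    ring
  funext x
  simp only [pg10, tilt, Pi.one_apply, one_mul, hexponent]

variable [Nonempty X]

theorem hasDerivAt_expVal_pg10 (f : X → ℝ) {lam γ : ℝ} (hr : 0 < lam / (lam + γ)) (g : ℝ) :
    HasDerivAt (fun s : ℝ => expVal (pg10 f lam γ s) f)
      (-((lam / (lam + γ)) ^ g * Real.log ((lam + γ) / lam) * (1 / γ) *
        varVal (pg10 f lam γ g) f)) g := by
  have hβ : HasDerivAt (fun s => (1 - (lam / (lam + γ)) ^ s) / γ)
      (-((lam / (lam + γ)) ^ g * Real.log (lam / (lam + γ))) / γ) g :=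
    (((hasStrictDerivAt_const_rpow hr g).hasDerivAt).const_sub 1).div_const γ
  have hmean := (hasDerivAt_expVal_tilt (π₀ := 1) (fun _ => one_pos) f f _).comp g hβ
  simp only [pg10_eq_tilt, ← varVal_eq_covVal] at hmean ⊢
  refine hmean.congr_deriv ?_
  rw [← inv_div lam, Real.log_inv]
  ring

end Interpolation

/-- derivative of the expected cost along the interpolated
sequence equals -α(g)·log((λ+γ)/λ)·(1/γ)·Var, hence the expectation is
non-increasing in g ≥ 0. -/
theorem erpic_expectation_derivative_uniform_prior {X : Type*} [Fintype X] [Nonempty X]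
    (f : X → ℝ) (lam γ : ℝ) (hlam : 0 < lam) (hγ : 0 < γ) :
    (∀ g : ℝ, 0 ≤ g →
      HasDerivAt (fun s : ℝ => expVal (pg10 f lam γ s) f)
        (-((lam / (lam + γ)) ^ g * Real.log ((lam + γ) / lam) * (1 / γ) *
          varVal (pg10 f lam γ g) f)) g ∧
      -((lam / (lam + γ)) ^ g * Real.log ((lam + γ) / lam) * (1 / γ) *
          varVal (pg10 f lam γ g) f) ≤ 0) ∧
    (∀ g₁ g₂ : ℝ, 0 ≤ g₁ → g₁ ≤ g₂ →
      expVal (pg10 f lam γ g₂) f ≤ expVal (pg10 f lam γ g₁) f) := by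
  have hr : 0 < lam / (lam + γ) := div_pos hlam (by linarith)
  have hderiv_nonpos (g : ℝ) :
      -((lam / (lam + γ)) ^ g * Real.log ((lam + γ) / lam) * (1 / γ) *
        varVal (pg10 f lam γ g) f) ≤ 0 := by
    have hlog : 0 ≤ Real.log ((lam + γ) / lam) :=
      Real.log_nonneg ((le_div_iff₀ hlam).2 (by linarith))
    have hvar : 0 ≤ varVal (pg10 f lam γ g) f := by
      rw [pg10_eq_tilt]
      exact (isPMF_tilt (fun _ => one_pos) f _).varVal_nonneg f
    have hα : 0 < (lam / (lam + γ)) ^ g := rpow_pos_of_pos hr g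
    have hγ_inv : 0 < 1 / γ := one_div_pos.2 hγ
    exact neg_nonpos.2 (by positivity)
  have hanti := antitone_of_hasDerivAt_nonpos (hasDerivAt_expVal_pg10 f hr) hderiv_nonpos
  exact ⟨fun g _ => ⟨hasDerivAt_expVal_pg10 f hr g, hderiv_nonpos g⟩,
    fun _ _ _ hle => hanti hle⟩
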